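/- arXiv:2010.11023 — 2 statements merged into one kernel-verified Lean document; each statement's English description precedes it below -/
import Mathlib

section
/- For every integer n > 1, let G*' be obtained from G* by adding an edge between the vertices E and F. Then the metric dimension of G*' is at least n − 2. (Consequently, adding a single edge to G* increases the metric dimension by at least n − ⌈log₂(n)⌉ − 3.) -/
/-- A set `R` of vertices resolves the graph `H` if every pair of distinct
vertices is distinguished by some vertex of `R`. -/
def resolves {V : Type*} (H : SimpleGraph V) (R : Set V) : Prop :=
  ∀ a b : V, a ≠ b → ∃ x ∈ R, H.dist a x ≠ H.dist b x

/-- The metric dimension: the least cardinality of a (finite) resolving set. -/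
noncomputable def metricDim {V : Type*} (H : SimpleGraph V) : ℕ :=
  sInf {k | ∃ R : Finset V, R.card = k ∧ resolves H (R : Set V)}

/-- The vertices of the graph `G*`: `⌈log₂ n⌉` level-0 vertices, levels 1–3 with
`n − 1` vertices each (`mid l i` is the vertex of level `l+1` with index `i+1`),
and the two special vertices `E` and `F`. -/
inductive GStarV (n : ℕ) where
  | lvl0 (j : Fin (Nat.clog 2 n))
  | mid (l : Fin 3) (i : Fin (n - 1))
  | E
  | F
  deriving DecidableEq

/-- The (asymmetric) edge relation of `G*`: `F` is joined to every level-0 vertex;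
the level-0 vertex `j` is joined to the level-1 vertex of index `i` iff the `j`-th
bit of the binary representation of `i` is 1; consecutive mid levels are joined at
equal indices; and every level-3 vertex is joined to `E`. -/
def gstarRel (n : ℕ) : GStarV n → GStarV n → Prop
  | .F, .lvl0 _ => True
  | .lvl0 j, .mid l i => (l : ℕ) = 0 ∧ Nat.testBit (i + 1) j = true
  | .mid l i, .mid l' i' => i = i' ∧ (l' : ℕ) = (l : ℕ) + 1
  | .mid l _, .E => (l : ℕ) = 2
  | _, _ => False

/-- The graph `G*`. -/
def GStar (n : ℕ) : SimpleGraph (GStarV n) where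
  Adj a b := gstarRel n a b ∨ gstarRel n b a
  symm := ⟨fun _ _ h => Or.symm h⟩
  loopless := ⟨by
    rintro a (h | h) <;> cases a <;> simp [gstarRel] at h⟩

/-- The graph `G*'`: `G*` together with the extra edge joining `E` and `F`. -/
def GStar' (n : ℕ) : SimpleGraph (GStarV n) :=
  GStar n ⊔ SimpleGraph.fromEdgeSet {s((GStarV.E : GStarV n), GStarV.F)}


/-! Distances are certified by labellings that change by at most one along edges and in
which every vertex other than the source has a neighbour one step closer, as in
breadth-first search.

In `G*'` the edge `EF` puts every vertex outside the columns `i` and `i'` at the same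
distance from `v^(3)_i` and from `v^(3)_{i'}`, so a resolving set meets all columns but at
most one and has at least `n - 2` elements. In `G*` the distance to `E` determines the level
of a vertex, and within a level the distance to `v^(0)_j` (`l + 1` or `l + 3`) reads off the
`j`-th bit of the column index; hence `E` and the `⌈log₂ n⌉` level-0 vertices resolve `G*`. -/

namespace SimpleGraph

variable {V : Type*} {G : SimpleGraph V}

/-- `f` is the distance from `a`, certified locally as in breadth-first search. -/
structure IsDistLabelling (G : SimpleGraph V) (a : V) (f : V → ℕ) : Prop where
  root : f a = 0
  le_succ_of_adj : ∀ u v, G.Adj u v → f v ≤ f u + 1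
  exists_parent : ∀ v, v ≠ a → ∃ u, G.Adj u v ∧ f u + 1 = f v

namespace IsDistLabelling

variable {a : V} {f : V → ℕ}

lemma le_add_length (hf : G.IsDistLabelling a f) {u v : V} (p : G.Walk u v) :
    f v ≤ f u + p.length := by
  induction p with
  | nil => simp
  | cons hadj _ ih =>
    have := hf.le_succ_of_adj _ _ hadj
    rw [Walk.length_cons]
    omega

lemma reachable_and_dist_le (hf : G.IsDistLabelling a f) (v : V) :
    G.Reachable a v ∧ G.dist a v ≤ f v := by
  induction hv : f v using Nat.strong_induction_on generalizing v with
  | _ m ih =>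
    by_cases hva : v = a
    · subst hva
      simp
    obtain ⟨u, hadj, hu⟩ := hf.exists_parent v hva
    obtain ⟨hreach, hdist⟩ := ih (f u) (by omega) u rfl
    refine ⟨hreach.trans hadj.reachable, ?_⟩
    rcases hadj.diff_dist_adj (u := a) with h | h | h <;> omega

lemma dist_eq (hf : G.IsDistLabelling a f) (v : V) : G.dist a v = f v := by
  obtain ⟨hreach, hle⟩ := hf.reachable_and_dist_le v
  obtain ⟨p, hp⟩ := hreach.exists_walk_length_eq_dist
  have := hf.le_add_length p
  rw [hf.root] at this
  omega

lemma connected (hf : G.IsDistLabelling a f) : G.Connected :=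
  have : Nonempty V := ⟨a⟩
  (connected_iff_exists_forall_reachable G).2 ⟨a, fun v => (hf.reachable_and_dist_le v).1⟩

end IsDistLabelling

end SimpleGraph

section MetricDim

variable {V : Type*} {H : SimpleGraph V}

lemma resolves_univ (hH : H.Connected) : resolves H Set.univ := fun a b hab =>
  ⟨a, Set.mem_univ a, by
    rw [SimpleGraph.dist_self, ne_comm, ← pos_iff_ne_zero]
    exact hH.pos_dist_of_ne hab.symm⟩

lemma metricDim_le_card {R : Finset V} (hR : resolves H R) : metricDim H ≤ R.card :=
  Nat.sInf_le ⟨R, rfl, hR⟩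

lemma le_metricDim [Fintype V] (hH : H.Connected) {k : ℕ}
    (hk : ∀ R : Finset V, resolves H R → k ≤ R.card) : k ≤ metricDim H := by
  obtain ⟨R, hcard, hR⟩ : metricDim H ∈ {k | ∃ R : Finset V, R.card = k ∧ resolves H R} :=
    Nat.sInf_mem ⟨_, Finset.univ, rfl, by simpa using resolves_univ hH⟩
  exact hcard ▸ hk R hR

end MetricDim

lemma Finset.card_sub_one_le_of_forall_ne {α : Type*} [Fintype α] [DecidableEq α]
    {s : Finset α} (hs : ∀ i j, i ≠ j → i ∈ s ∨ j ∈ s) : Fintype.card α - 1 ≤ s.card := by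
  have : sᶜ.card ≤ 1 := Finset.card_le_one.2 fun i hi j hj => by
    by_contra hij
    rcases hs i j hij with h | h <;> simp_all
  rw [Finset.card_compl] at this
  omega

namespace GStarV

variable {n : ℕ}

instance : Fintype (GStarV n) :=
  Fintype.ofSurjective
    (Sum.elim lvl0 (Sum.elim (fun p : Fin 3 × Fin (n - 1) => mid p.1 p.2) (cond · E F)))
    (by rintro (j | ⟨l, i⟩ | _ | _)
        exacts [⟨.inl j, rfl⟩, ⟨.inr (.inl (l, i)), rfl⟩, ⟨.inr (.inr true), rfl⟩,
          ⟨.inr (.inr false), rfl⟩])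

def col : GStarV n → Option (Fin (n - 1))
  | mid _ i => some i
  | _ => none

end GStarV

section Bits

variable {n : ℕ}

lemma lt_clog_of_testBit {k : Fin (n - 1)} {j : ℕ} (h : Nat.testBit (k + 1) j = true) :
    j < Nat.clog 2 n := by
  by_contra! hj
  have : (k : ℕ) + 1 < 2 ^ j := calc
    (k : ℕ) + 1 < n := by omega
    _ ≤ 2 ^ Nat.clog 2 n := Nat.le_pow_clog one_lt_two n
    _ ≤ 2 ^ j := Nat.pow_le_pow_right two_pos hj
  simp [Nat.testBit_eq_false_of_lt this] at h

lemma exists_testBit (k : Fin (n - 1)) :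
    ∃ j : Fin (Nat.clog 2 n), Nat.testBit (k + 1) j = true := by
  obtain ⟨j, hj⟩ := Nat.exists_testBit_of_ne_zero (Nat.succ_ne_zero k)
  exact ⟨⟨j, lt_clog_of_testBit hj⟩, hj⟩

lemma exists_testBit_ne {k k' : Fin (n - 1)} (h : k ≠ k') :
    ∃ j : Fin (Nat.clog 2 n), Nat.testBit (k + 1) j ≠ Nat.testBit (k' + 1) j := by
  obtain ⟨j, hj⟩ := Nat.exists_testBit_ne_of_ne (x := k + 1) (y := k' + 1)
    (fun h' => h (Fin.ext (by omega)))
  have : j < Nat.clog 2 n := by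
    cases hk : Nat.testBit (k + 1) j
    · exact lt_clog_of_testBit (k := k') (by simpa [hk] using hj.symm)
    · exact lt_clog_of_testBit hk
  exact ⟨⟨j, this⟩, hj⟩

/-- Column `2^j - 1` has bit `j` set. -/
lemma exists_col_testBit (hn : 1 < n) (j : Fin (Nat.clog 2 n)) :
    ∃ k : Fin (n - 1), Nat.testBit (k + 1) j = true := by
  have hpos : 0 < 2 ^ (j : ℕ) := Nat.two_pow_pos j
  have hlt : 2 ^ (j : ℕ) < n := calc
    2 ^ (j : ℕ) ≤ 2 ^ (Nat.clog 2 n).pred :=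
      Nat.pow_le_pow_right two_pos (Nat.le_pred_of_lt j.isLt)
    _ < n := Nat.pow_pred_clog_lt_self one_lt_two hn
  exact ⟨⟨2 ^ (j : ℕ) - 1, by omega⟩, by simp [Nat.sub_add_cancel hpos]⟩

end Bits

section Edges

open GStarV

variable {n : ℕ}

@[elab_as_elim]
lemma gstarRel_induction {motive : GStarV n → GStarV n → Prop}
    (F_lvl0 : ∀ j, motive F (lvl0 j))
    (lvl0_mid : ∀ (j : Fin (Nat.clog 2 n)) (k : Fin (n - 1)),
      Nat.testBit (k + 1) j = true → motive (lvl0 j) (mid 0 k))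
    (mid_mid₀₁ : ∀ k, motive (mid 0 k) (mid 1 k))
    (mid_mid₁₂ : ∀ k, motive (mid 1 k) (mid 2 k))
    (mid_E : ∀ k, motive (mid 2 k) E) {a b : GStarV n} (h : gstarRel n a b) : motive a b := by
  rcases a with j | ⟨l, k⟩ | _ | _ <;> rcases b with j' | ⟨l', k'⟩ | _ | _ <;>
    simp only [gstarRel] at h
  · obtain ⟨hl, hbit⟩ := h
    obtain rfl : l' = 0 := Fin.ext hl
    exact lvl0_mid j k' hbit
  · obtain ⟨rfl, hl⟩ := h
    fin_cases l <;> fin_cases l' <;> simp at hl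
    exacts [mid_mid₀₁ k, mid_mid₁₂ k]
  · obtain rfl : l = 2 := Fin.ext h
    exact mid_E k
  · exact F_lvl0 j'

lemma GStar.adj_F_lvl0 (j : Fin (Nat.clog 2 n)) : (GStar n).Adj F (lvl0 j) := Or.inl trivial

lemma GStar.adj_lvl0_mid {j : Fin (Nat.clog 2 n)} {k : Fin (n - 1)}
    (h : Nat.testBit (k + 1) j = true) : (GStar n).Adj (lvl0 j) (mid 0 k) := Or.inl ⟨rfl, h⟩

lemma GStar.adj_mid_mid {l l' : Fin 3} (k : Fin (n - 1)) (h : (l' : ℕ) = l + 1) :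
    (GStar n).Adj (mid l k) (mid l' k) := Or.inl ⟨rfl, h⟩

lemma GStar.adj_mid_E (k : Fin (n - 1)) : (GStar n).Adj (mid 2 k) E := Or.inl rfl

lemma GStar_le_GStar' : GStar n ≤ GStar' n := le_sup_left

lemma GStar'.adj_E_F : (GStar' n).Adj E F :=
  Or.inr ((SimpleGraph.fromEdgeSet_adj _).2 ⟨rfl, by simp⟩)

lemma GStar.le_succ_of_adj {f : GStarV n → ℕ}
    (hf : ∀ a b, gstarRel n a b → f b ≤ f a + 1 ∧ f a ≤ f b + 1) (a b : GStarV n)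
    (h : (GStar n).Adj a b) : f b ≤ f a + 1 := by
  rcases h with h | h
  exacts [(hf a b h).1, (hf b a h).2]

lemma GStar'.le_succ_of_adj {f : GStarV n → ℕ}
    (hf : ∀ a b, gstarRel n a b → f b ≤ f a + 1 ∧ f a ≤ f b + 1)
    (hEF : f F ≤ f E + 1 ∧ f E ≤ f F + 1) (a b : GStarV n)
    (h : (GStar' n).Adj a b) : f b ≤ f a + 1 := by
  rcases h with h | h
  · exact GStar.le_succ_of_adj hf a b h
  · obtain ⟨h, -⟩ := (SimpleGraph.fromEdgeSet_adj _).1 h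
    rcases Sym2.eq_iff.1 h with ⟨rfl, rfl⟩ | ⟨rfl, rfl⟩
    exacts [hEF.1, hEF.2]

end Edges

section LowerBound

open GStarV

variable {n : ℕ}

def distFromTop (i : Fin (n - 1)) : GStarV n → ℕ
  | lvl0 _ => 3
  | mid l k => if k = i then 2 - l else 4 - l
  | E => 1
  | F => 2

lemma isDistLabelling_distFromTop (i : Fin (n - 1)) :
    (GStar' n).IsDistLabelling (mid 2 i) (distFromTop i) where
  root := by simp [distFromTop]
  le_succ_of_adj := GStar'.le_succ_of_adj
    (fun _ _ h => by
      refine gstarRel_induction ?_ ?_ ?_ ?_ ?_ h <;> intros <;> simp only [distFromTop] <;>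
        (try split_ifs) <;> simp)
    (by simp [distFromTop])
  exists_parent := by
    rintro (j | ⟨l, k⟩ | _ | _) hv
    · exact ⟨F, GStar_le_GStar' (GStar.adj_F_lvl0 j), rfl⟩
    · fin_cases l
      · exact ⟨mid 1 k, (GStar_le_GStar' (GStar.adj_mid_mid k rfl)).symm, by
          simp only [distFromTop]; split_ifs <;> simp⟩
      · exact ⟨mid 2 k, (GStar_le_GStar' (GStar.adj_mid_mid k rfl)).symm, by
          simp only [distFromTop]; split_ifs <;> simp⟩
      · have hk : k ≠ i := by rintro rfl; exact hv rfl
        exact ⟨E, (GStar_le_GStar' (GStar.adj_mid_E k)).symm, by simp [distFromTop, hk]⟩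
    · exact ⟨mid 2 i, GStar_le_GStar' (GStar.adj_mid_E i), by simp [distFromTop]⟩
    · exact ⟨E, GStar'.adj_E_F, rfl⟩

lemma distFromTop_eq_of_col_ne {i i' : Fin (n - 1)} {x : GStarV n} (hi : x.col ≠ some i)
    (hi' : x.col ≠ some i') : distFromTop i x = distFromTop i' x := by
  rcases x with _ | ⟨l, k⟩ | _ | _ <;> simp_all [col, distFromTop]

lemma exists_mem_col_of_resolves {R : Finset (GStarV n)} (hR : resolves (GStar' n) R)
    {i i' : Fin (n - 1)} (hii' : i ≠ i') : ∃ x ∈ R, x.col = some i ∨ x.col = some i' := by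
  obtain ⟨x, hxR, hx⟩ := hR (mid 2 i) (mid 2 i') (by simpa using hii')
  refine ⟨x, hxR, ?_⟩
  by_contra! hcol
  rw [(isDistLabelling_distFromTop i).dist_eq, (isDistLabelling_distFromTop i').dist_eq] at hx
  exact hx (distFromTop_eq_of_col_ne hcol.1 hcol.2)

lemma sub_two_le_card_of_resolves {R : Finset (GStarV n)} (hR : resolves (GStar' n) R) :
    n - 2 ≤ R.card := by
  classical
  set S := Finset.univ.filter fun i => some i ∈ R.image col
  have hS : n - 1 - 1 ≤ S.card := by
    simpa using Finset.card_sub_one_le_of_forall_ne (s := S) fun i i' hii' => by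
      obtain ⟨x, hxR, hx | hx⟩ := exists_mem_col_of_resolves hR hii'
      · exact Or.inl (by simpa [S] using ⟨x, hxR, hx⟩)
      · exact Or.inr (by simpa [S] using ⟨x, hxR, hx⟩)
  have : S.card ≤ R.card := calc
    S.card = (S.map Function.Embedding.some).card := (Finset.card_map _).symm
    _ ≤ (R.image col).card := Finset.card_le_card fun y hy => by
      obtain ⟨i, hi, rfl⟩ := Finset.mem_map.1 hy
      exact (Finset.mem_filter.1 hi).2
    _ ≤ R.card := Finset.card_image_le
  omega

end LowerBound

section UpperBound

open GStarV

variable {n : ℕ}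

def distFromE : GStarV n → ℕ
  | lvl0 _ => 4
  | mid l _ => 3 - l
  | E => 0
  | F => 5

def distFromLvl0 (j : Fin (Nat.clog 2 n)) : GStarV n → ℕ
  | lvl0 j' => if j' = j then 0 else 2
  | mid l k => (if Nat.testBit (k + 1) j then 1 else 3) + l
  | E => 4
  | F => 1

lemma isDistLabelling_distFromE (hn : 1 < n) : (GStar n).IsDistLabelling E distFromE where
  root := rfl
  le_succ_of_adj := GStar.le_succ_of_adj fun _ _ h => by
    refine gstarRel_induction ?_ ?_ ?_ ?_ ?_ h <;> intros <;> simp [distFromE]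
  exists_parent := by
    rintro (j | ⟨l, k⟩ | _ | _) hv
    · obtain ⟨k, hk⟩ := exists_col_testBit hn j
      exact ⟨mid 0 k, (GStar.adj_lvl0_mid hk).symm, rfl⟩
    · fin_cases l
      · exact ⟨mid 1 k, (GStar.adj_mid_mid k rfl).symm, rfl⟩
      · exact ⟨mid 2 k, (GStar.adj_mid_mid k rfl).symm, rfl⟩
      · exact ⟨E, (GStar.adj_mid_E k).symm, rfl⟩
    · exact absurd rfl hv
    · exact ⟨lvl0 ⟨0, Nat.clog_pos one_lt_two hn⟩, (GStar.adj_F_lvl0 _).symm, rfl⟩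

lemma isDistLabelling_distFromLvl0 (hn : 1 < n) (j : Fin (Nat.clog 2 n)) :
    (GStar n).IsDistLabelling (lvl0 j) (distFromLvl0 j) where
  root := by simp [distFromLvl0]
  le_succ_of_adj := GStar.le_succ_of_adj fun _ _ h => by
    refine gstarRel_induction ?_ ?_ ?_ ?_ ?_ h <;> intros <;> simp only [distFromLvl0] <;>
      (try split_ifs) <;> simp_all
  exists_parent := by
    rintro (j' | ⟨l, k⟩ | _ | _) hv
    · exact ⟨F, GStar.adj_F_lvl0 j', by simpa [distFromLvl0] using hv⟩
    · fin_cases l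
      · by_cases hk : Nat.testBit (k + 1) j = true
        · exact ⟨lvl0 j, GStar.adj_lvl0_mid hk, by simp [distFromLvl0, hk]⟩
        · obtain ⟨j', hj'⟩ := exists_testBit k
          have : j' ≠ j := by rintro rfl; exact hk hj'
          exact ⟨lvl0 j', GStar.adj_lvl0_mid hj', by simp [distFromLvl0, hk, this]⟩
      · exact ⟨mid 0 k, GStar.adj_mid_mid k rfl, by simp [distFromLvl0]⟩
      · exact ⟨mid 1 k, GStar.adj_mid_mid k rfl, by simp [distFromLvl0]⟩
    · obtain ⟨k, hk⟩ := exists_col_testBit hn j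
      exact ⟨mid 2 k, GStar.adj_mid_E k, by simp [distFromLvl0, hk]⟩
    · exact ⟨lvl0 j, (GStar.adj_F_lvl0 j).symm, by simp [distFromLvl0]⟩

lemma eq_of_distFromE_eq_of_distFromLvl0_eq {a b : GStarV n} (hd : distFromE a = distFromE b)
    (hj : ∀ j, distFromLvl0 j a = distFromLvl0 j b) : a = b := by
  rcases a with ja | ⟨la, ka⟩ | _ | _ <;> rcases b with jb | ⟨lb, kb⟩ | _ | _ <;>
    simp only [distFromE] at hd <;> try omega
  · simpa [distFromLvl0, eq_comm] using hj ja
  · obtain rfl : la = lb := by omega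
    by_contra hne
    obtain ⟨j, hbit⟩ := exists_testBit_ne (k := ka) (k' := kb) (by simpa using hne)
    have := hj j
    cases hka : Nat.testBit (ka + 1) j <;> cases hkb : Nat.testBit (kb + 1) j <;>
      simp_all [distFromLvl0]
  · rfl
  · rfl

def landmarks (n : ℕ) : Finset (GStarV n) :=
  insert E (Finset.univ.map ⟨lvl0, fun _ _ => lvl0.inj⟩)

lemma card_landmarks : (landmarks n).card = Nat.clog 2 n + 1 := by
  simp [landmarks]

lemma resolves_landmarks (hn : 1 < n) : resolves (GStar n) (landmarks n) := by
  intro a b hab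
  by_contra! h
  refine hab (eq_of_distFromE_eq_of_distFromLvl0_eq ?_ fun j => ?_)
  · simpa [(isDistLabelling_distFromE hn).dist_eq, SimpleGraph.dist_comm (u := a),
      SimpleGraph.dist_comm (u := b)] using h E (by simp [landmarks])
  · simpa [(isDistLabelling_distFromLvl0 hn j).dist_eq, SimpleGraph.dist_comm (u := a),
      SimpleGraph.dist_comm (u := b)] using
      h (lvl0 j) (Finset.mem_insert_of_mem (Finset.mem_map_of_mem _ (Finset.mem_univ j)))

end UpperBound

/-- Claim 5: for every `n > 1`, the metric dimension of `G*'` is at least `n − 2`;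
consequently adding the single edge `(E,F)` to `G*` increases the metric dimension
by at least `n − ⌈log₂ n⌉ − 3`. -/
theorem stmt_6 (n : ℕ) (hn : 1 < n) :
    n - 2 ≤ metricDim (GStar' n) ∧
    (n : ℤ) - (Nat.clog 2 n : ℤ) - 3 ≤
      (metricDim (GStar' n) : ℤ) - (metricDim (GStar n) : ℤ) := by
  have hconn : (GStar' n).Connected :=
    (isDistLabelling_distFromE hn).connected.mono GStar_le_GStar'
  have hlower : n - 2 ≤ metricDim (GStar' n) :=
    le_metricDim hconn fun _ => sub_two_le_card_of_resolves
  have hupper : metricDim (GStar n) ≤ Nat.clog 2 n + 1 :=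
    card_landmarks (n := n) ▸ metricDim_le_card (resolves_landmarks hn)
  exact ⟨hlower, by omega⟩
end

section
/- Let G be the m×n rectangle grid graph and let G' be G with an extra edge e between E = (x_E, y_E) and F = (x_F, y_F) satisfying: d_G(E,F) ≥ 2; x_F ≤ x_E, y_E ≤ y_F, x_E − x_F ≤ y_F − y_E; x_F ≠ x_E; Gain' ≥ 2; and neither E nor F lies on the boundary of the grid. Let α = (1 + y_F + y_E + x_F − x_E)/2 and β = (1 + y_F + y_E + x_E − x_F)/2. Then the normal region of G' is exactly N = {(x,y) : x < x_F, α − 1 ≤ y ≤ α} ∪ {(x,y) : x_F ≤ x ≤ x_E, x_F − α ≤ x − y ≤ x_F − α + 1} ∪ {(x,y) : x > x_E, β − 1 ≤ y ≤ β}. -/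
/-- The rectangle grid graph with `n` columns and `m` rows: the vertex `(i, j)`
(with `i : Fin n`, `j : Fin m`) represents the grid point in column `i + 1` and row
`j + 1`; two vertices are adjacent when they differ by exactly 1 in exactly one
coordinate, i.e. when their ℓ¹ distance is 1. -/
def grid2 (n m : ℕ) : SimpleGraph (Fin n × Fin m) where
  Adj a b := |((a.1 : ℕ) : ℤ) - ((b.1 : ℕ) : ℤ)| + |((a.2 : ℕ) : ℤ) - ((b.2 : ℕ) : ℤ)| = 1
  symm := by
    constructor
    intro a b h
    rw [abs_sub_comm ((b.1 : ℕ) : ℤ), abs_sub_comm ((b.2 : ℕ) : ℤ)]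
    exact h
  loopless := by constructor; intro a h; simp at h

/-- The special region of `A`: vertices whose distance to `A` decreased from `G` to `G'`. -/
def specialRegion {V : Type*} (G G' : SimpleGraph V) (A : V) : Set V :=
  {Z | G'.dist Z A < G.dist Z A}

/-- The normal region: vertices with empty special region. -/
def normalRegion {V : Type*} (G G' : SimpleGraph V) : Set V :=
  {Z | specialRegion G G' Z = ∅}

/-- The (1-indexed) column coordinate of a grid vertex, as a rational number. -/
def Xc {n m : ℕ} (v : Fin n × Fin m) : ℚ := ((v.1 : ℕ) : ℚ) + 1

/-- The (1-indexed) row coordinate of a grid vertex, as a rational number. -/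
def Yc {n m : ℕ} (v : Fin n × Fin m) : ℚ := ((v.2 : ℕ) : ℚ) + 1

/-- `v` lies on the boundary of the grid. -/
def onBoundary {n m : ℕ} (v : Fin n × Fin m) : Prop :=
  (v.1 : ℕ) = 0 ∨ (v.1 : ℕ) = n - 1 ∨ (v.2 : ℕ) = 0 ∨ (v.2 : ℕ) = m - 1

/-! A vertex `A` is normal iff `|d(E, A) - d(F, A)| ≤ 1`. If this fails, the endpoint farther from
`A` gets closer to it through the new edge; if it holds, `d_G(·, A)` is still 1-Lipschitz along
every edge of `G'`, hence a lower bound for `d_{G'}(·, A)`. In the grid `d` is the ℓ¹ distance, and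
solving `|ℓ¹(E, A) - ℓ¹(F, A)| ≤ 1` piecewise gives the three strips. -/

namespace SimpleGraph

variable {V : Type*} {G : SimpleGraph V}

theorem Walk.le_add_length {f : V → ℤ} (hf : ∀ u v, G.Adj u v → f u ≤ f v + 1) {u v : V}
    (p : G.Walk u v) : f u ≤ f v + p.length := by
  induction p with
  | nil => simp
  | cons h _ ih =>
    rw [length_cons]
    have := hf _ _ h
    push_cast
    linarith

theorem Reachable.le_add_dist {f : V → ℤ} (hf : ∀ u v, G.Adj u v → f u ≤ f v + 1) {u v : V}
    (h : G.Reachable u v) : f u ≤ f v + G.dist u v := by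
  obtain ⟨p, hp⟩ := h.exists_walk_length_eq_dist
  exact hp ▸ p.le_add_length hf

theorem exists_walk_length_le_of_exists_adj_lt {t : V} (f : V → ℕ)
    (hf : ∀ u ≠ t, ∃ w, G.Adj u w ∧ f w < f u) (u : V) : ∃ p : G.Walk u t, p.length ≤ f u := by
  induction h : f u using Nat.strong_induction_on generalizing u with
  | _ k ih =>
    by_cases hut : u = t
    · subst hut
      exact ⟨.nil, by simp⟩
    obtain ⟨w, hadj, hlt⟩ := hf u hut
    obtain ⟨p, hp⟩ := ih (f w) (h ▸ hlt) w rfl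
    exact ⟨.cons hadj p, by rw [Walk.length_cons]; omega⟩

theorem mem_normalRegion_sup_edge (hG : G.Preconnected) {E F : V} (hEF : E ≠ F) {A : V} :
    A ∈ normalRegion G (G ⊔ edge E F) ↔
      G.dist E A ≤ G.dist F A + 1 ∧ G.dist F A ≤ G.dist E A + 1 := by
  have hEF' : (G ⊔ edge E F).Adj E F := by simp [edge_adj, hEF]
  have shortcut {X Y : V} (hXY : (G ⊔ edge E F).Adj X Y) :
      (G ⊔ edge E F).dist X A ≤ G.dist Y A + 1 := by
    calc (G ⊔ edge E F).dist X A ≤ (G ⊔ edge E F).dist X Y + (G ⊔ edge E F).dist Y A :=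
          ((hG Y A).mono le_sup_left).dist_triangle_right X
      _ ≤ G.dist Y A + 1 := by
          rw [dist_eq_one_iff_adj.mpr hXY, add_comm]
          exact Nat.add_le_add_right ((hG Y A).dist_anti le_sup_left) 1
  simp only [normalRegion, specialRegion, Set.mem_ofPred_eq, Set.eq_empty_iff_forall_notMem,
    not_lt]
  constructor
  · intro h
    exact ⟨(h E).trans (shortcut hEF'), (h F).trans (shortcut hEF'.symm)⟩
  · rintro ⟨hE, hF⟩ Z
    have hlip : ∀ X Y, (G ⊔ edge E F).Adj X Y → (G.dist X A : ℤ) ≤ G.dist Y A + 1 := by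
      intro X Y hXY
      rcases hXY with hXY | hXY
      · have := (hG Y A).dist_triangle_right X
        rw [dist_eq_one_iff_adj.mpr hXY] at this
        omega
      · obtain ⟨⟨rfl, rfl⟩ | ⟨rfl, rfl⟩, -⟩ := (edge_adj _ _ _ _).mp hXY <;> omega
    have := ((hG Z A).mono le_sup_left).le_add_dist hlip
    simp only [dist_self, Nat.cast_zero, zero_add] at this
    exact_mod_cast this

end SimpleGraph

theorem Fin.exists_step_toward {n : ℕ} {i j : Fin n} (hij : i ≠ j) :
    ∃ k : Fin n, ((i : ℤ) - k).natAbs = 1 ∧ ((k : ℤ) - j).natAbs < ((i : ℤ) - j).natAbs := by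
  rcases Fin.lt_or_lt_of_ne hij with h | h
  · exact ⟨⟨i + 1, by omega⟩, by simp only; omega⟩
  · exact ⟨⟨i - 1, by omega⟩, by simp only; omega⟩

section Grid

variable {n m : ℕ}

def gridL1 (u v : Fin n × Fin m) : ℕ :=
  ((u.1 : ℤ) - v.1).natAbs + ((u.2 : ℤ) - v.2).natAbs

theorem grid2_adj_iff {u v : Fin n × Fin m} : (grid2 n m).Adj u v ↔ gridL1 u v = 1 := by
  change |((u.1 : ℕ) : ℤ) - v.1| + |((u.2 : ℕ) : ℤ) - v.2| = 1 ↔ _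
  rw [Int.abs_eq_natAbs, Int.abs_eq_natAbs, gridL1]
  omega

theorem grid2_exists_adj_gridL1_lt {u v : Fin n × Fin m} (huv : u ≠ v) :
    ∃ w, (grid2 n m).Adj u w ∧ gridL1 w v < gridL1 u v := by
  simp only [grid2_adj_iff, gridL1]
  by_cases h1 : u.1 = v.1
  · obtain ⟨k, hk, hlt⟩ := Fin.exists_step_toward fun h2 => huv (Prod.ext h1 h2)
    exact ⟨(u.1, k), by simp only; omega⟩
  · obtain ⟨k, hk, hlt⟩ := Fin.exists_step_toward h1
    exact ⟨(k, u.2), by simp only; omega⟩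

theorem grid2_dist_eq_gridL1 (u v : Fin n × Fin m) : (grid2 n m).dist u v = gridL1 u v := by
  obtain ⟨p, hp⟩ := SimpleGraph.exists_walk_length_le_of_exists_adj_lt (fun w => gridL1 w v)
    (fun _ => grid2_exists_adj_gridL1_lt) u
  refine le_antisymm ((SimpleGraph.dist_le p).trans hp) ?_
  have hlip : ∀ x y, (grid2 n m).Adj x y → (gridL1 x v : ℤ) ≤ gridL1 y v + 1 := by
    intro x y hxy
    rw [grid2_adj_iff, gridL1] at hxy
    simp only [gridL1]
    omega
  have hvv : gridL1 v v = 0 := by simp [gridL1]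
  have := p.reachable.le_add_dist hlip
  omega

theorem grid2_preconnected : (grid2 n m).Preconnected := fun u v =>
  (SimpleGraph.exists_walk_length_le_of_exists_adj_lt (fun w => gridL1 w v)
    (fun _ => grid2_exists_adj_gridL1_lt) u).elim fun p _ => p.reachable

theorem grid2_dist_eq_abs_add_abs (u v : Fin n × Fin m) :
    ((grid2 n m).dist u v : ℚ) = |Xc u - Xc v| + |Yc u - Yc v| := by
  rw [grid2_dist_eq_gridL1, gridL1, Xc, Xc, Yc, Yc]
  push_cast [Nat.cast_natAbs]
  ring_nf

end Grid

-- Steepness excludes the rows `y < b` and `y > d`, where the difference has absolute value ≥ 3.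
theorem abs_l1_sub_l1_le_one_iff {a b c d x y : ℚ} (hca : c ≤ a)
    (hsteep : 2 ≤ (d - b) - (a - c) - 1) :
    |(|a - x| + |b - y|) - (|c - x| + |d - y|)| ≤ 1 ↔
      ((x < c ∧ (1 + d + b + c - a) / 2 - 1 ≤ y ∧ y ≤ (1 + d + b + c - a) / 2) ∨
       (c ≤ x ∧ x ≤ a ∧ c - (1 + d + b + c - a) / 2 ≤ x - y ∧
          x - y ≤ c - (1 + d + b + c - a) / 2 + 1) ∨
       (a < x ∧ (1 + d + b + a - c) / 2 - 1 ≤ y ∧ y ≤ (1 + d + b + a - c) / 2)) := by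
  rw [abs_le]
  rcases abs_cases (a - x) with ⟨e1, -⟩ | ⟨e1, -⟩ <;>
  rcases abs_cases (b - y) with ⟨e2, -⟩ | ⟨e2, -⟩ <;>
  rcases abs_cases (c - x) with ⟨e3, -⟩ | ⟨e3, -⟩ <;>
  rcases abs_cases (d - y) with ⟨e4, -⟩ | ⟨e4, -⟩ <;>
  rw [e1, e2, e3, e4] <;> grind

theorem stmt_16_general {m n : ℕ}
    (E F : Fin n × Fin m)
    (h1 : Xc F ≤ Xc E)
    (h5 : (2 : ℚ) ≤ (Yc F - Yc E) - (Xc E - Xc F) - 1)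
    (G' : SimpleGraph (Fin n × Fin m))
    (hG' : G' = grid2 n m ⊔ SimpleGraph.fromEdgeSet {s(E, F)}) :
    let α : ℚ := (1 + Yc F + Yc E + Xc F - Xc E) / 2
    let β : ℚ := (1 + Yc F + Yc E + Xc E - Xc F) / 2
    normalRegion (grid2 n m) G' =
      {v : Fin n × Fin m |
        (Xc v < Xc F ∧ α - 1 ≤ Yc v ∧ Yc v ≤ α) ∨
        (Xc F ≤ Xc v ∧ Xc v ≤ Xc E ∧
          Xc F - α ≤ Xc v - Yc v ∧ Xc v - Yc v ≤ Xc F - α + 1) ∨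
        (Xc E < Xc v ∧ β - 1 ≤ Yc v ∧ Yc v ≤ β)} := by
  intro α β
  subst hG'
  have hEF : E ≠ F := by
    rintro rfl
    linarith
  ext v
  refine (SimpleGraph.mem_normalRegion_sup_edge grid2_preconnected hEF).trans ?_
  refine Iff.trans ?_ (abs_l1_sub_l1_le_one_iff h1 h5)
  rw [← grid2_dist_eq_abs_add_abs, ← grid2_dist_eq_abs_add_abs, abs_sub_le_iff,
    sub_le_iff_le_add', sub_le_iff_le_add']
  norm_cast

/-- Claim 10 (exact characterization of the normal region): under the
symmetry-breaking and edge-case-removal assumptions, with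
`α = (1 + y_F + y_E + x_F − x_E)/2` and `β = (1 + y_F + y_E + x_E − x_F)/2`,
the normal region of the grid-plus-edge is exactly the union of the three strips
`{x < x_F, α − 1 ≤ y ≤ α}`, `{x_F ≤ x ≤ x_E, x_F − α ≤ x − y ≤ x_F − α + 1}` and
`{x > x_E, β − 1 ≤ y ≤ β}`. -/
theorem stmt_16 {m n : ℕ}
    (E F : Fin n × Fin m)
    (hdist : 2 ≤ (grid2 n m).dist E F)
    (h1 : Xc F ≤ Xc E) (h2 : Yc E ≤ Yc F)
    (h3 : Xc E - Xc F ≤ Yc F - Yc E)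
    (h4 : Xc F ≠ Xc E)
    (h5 : (2 : ℚ) ≤ (Yc F - Yc E) - (Xc E - Xc F) - 1)
    (h6 : ¬ onBoundary E) (h7 : ¬ onBoundary F)
    (G' : SimpleGraph (Fin n × Fin m))
    (hG' : G' = grid2 n m ⊔ SimpleGraph.fromEdgeSet {s(E, F)}) :
    let α : ℚ := (1 + Yc F + Yc E + Xc F - Xc E) / 2
    let β : ℚ := (1 + Yc F + Yc E + Xc E - Xc F) / 2
    normalRegion (grid2 n m) G' =
      {v : Fin n × Fin m |
        (Xc v < Xc F ∧ α - 1 ≤ Yc v ∧ Yc v ≤ α) ∨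
        (Xc F ≤ Xc v ∧ Xc v ≤ Xc E ∧
          Xc F - α ≤ Xc v - Yc v ∧ Xc v - Yc v ≤ Xc F - α + 1) ∨
        (Xc E < Xc v ∧ β - 1 ≤ Yc v ∧ Yc v ≤ β)} :=
  stmt_16_general E F h1 h5 G' hG'
end
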